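/- arXiv:1102.1531 — 2 statements merged into one kernel-verified Lean document; each statement's English description precedes it below -/
import Mathlib

section
/- A subset A of the real numbers is bounded if and only if it is lacunarily statistically ward compact, i.e., every sequence of points in A has a lacunarily statistically quasi-Cauchy subsequence. -/
/-!
A bounded sequence has a convergent subsequence (Bolzano–Weierstrass), whose consecutive
differences tend to `0`; ordinary convergence implies lacunary statistical convergence, since
the blocks `I_r` eventually lie beyond any given index. Conversely, an unbounded set contains a
sequence with `|x m| + 1 ≤ |x n|` whenever `m < n`, so every subsequence has all its consecutive
differences of size at least `1`: the proportion of such indices in every block is `1`.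
-/

open Filter Finset Topology

/-- A sequence `x` converges statistically to `ℓ`. -/
def StatConvTo (x : ℕ → ℝ) (ℓ : ℝ) : Prop :=
  ∀ ε > 0, Tendsto (fun n : ℕ =>
      ((((Finset.range n).filter fun k => ε ≤ |x k - ℓ|).card : ℝ) / (n : ℝ)))
    atTop (𝓝 0)

/-- A sequence is statistically quasi-Cauchy if its difference sequence
converges statistically to `0`. -/
def StatQC (a : ℕ → ℝ) : Prop :=
  StatConvTo (fun n => a (n + 1) - a n) 0

/-- A lacunary sequence `θ = (k_r)`: strictly increasing, `k 0 = 0`,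
and `h_r = k_{r+1} - k_r → ∞`. -/
structure Lacunary where
  k : ℕ → ℕ
  strictMono : StrictMono k
  zero : k 0 = 0
  h_tendsto : Tendsto (fun r => k (r + 1) - k r) atTop atTop

/-- Lacunary statistical convergence of `x` to `ℓ` with respect to `θ`. -/
def LacStatConvTo (θ : Lacunary) (x : ℕ → ℝ) (ℓ : ℝ) : Prop :=
  ∀ ε > 0, Tendsto (fun r : ℕ =>
      ((((Finset.Ioc (θ.k r) (θ.k (r + 1))).filter fun i => ε ≤ |x i - ℓ|).card : ℝ)
        / ((θ.k (r + 1) - θ.k r : ℕ) : ℝ)))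
    atTop (𝓝 0)

/-- A sequence is lacunarily statistically quasi-Cauchy (w.r.t. `θ`). -/
def LacStatQC (θ : Lacunary) (a : ℕ → ℝ) : Prop :=
  LacStatConvTo θ (fun n => a (n + 1) - a n) 0

/-- `liminf q_r > 1` where `q_r = k_{r+1} / k_r`. -/
def LiminfQGtOne (θ : Lacunary) : Prop :=
  ∃ a : ℝ, 1 < a ∧ ∀ᶠ r in atTop, a ≤ (θ.k (r + 1) : ℝ) / (θ.k r : ℝ)

/-- `limsup q_r < ∞` where `q_r = k_{r+1} / k_r`. -/
def LimsupQLtTop (θ : Lacunary) : Prop :=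
  ∃ H : ℝ, ∀ᶠ r in atTop, (θ.k (r + 1) : ℝ) / (θ.k r : ℝ) ≤ H

/-- `A` is lacunarily statistically ward compact w.r.t. `θ`. -/
def LacStatWardCompact (θ : Lacunary) (A : Set ℝ) : Prop :=
  ∀ x : ℕ → ℝ, (∀ n, x n ∈ A) →
    ∃ φ : ℕ → ℕ, StrictMono φ ∧ LacStatQC θ (x ∘ φ)

/-- `f` is lacunarily statistically ward continuous on `A` w.r.t. `θ`. -/
def LacStatWardContOn (θ : Lacunary) (f : ℝ → ℝ) (A : Set ℝ) : Prop :=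
  ∀ x : ℕ → ℝ, (∀ n, x n ∈ A) → LacStatQC θ x → LacStatQC θ (f ∘ x)

namespace Lacunary

variable (θ : Lacunary)

theorem le_k (r : ℕ) : r ≤ θ.k r :=
  θ.strictMono.le_apply

theorem k_sub_k_pos (r : ℕ) : 0 < θ.k (r + 1) - θ.k r :=
  Nat.sub_pos_of_lt (θ.strictMono r.lt_succ_self)

end Lacunary

theorem LacStatConvTo.of_tendsto {θ : Lacunary} {x : ℕ → ℝ} {ℓ : ℝ}
    (hx : Tendsto x atTop (𝓝 ℓ)) : LacStatConvTo θ x ℓ := by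
  intro ε hε
  obtain ⟨N, hN⟩ := Metric.tendsto_atTop.mp hx ε hε
  refine tendsto_const_nhds.congr' ?_
  filter_upwards [eventually_ge_atTop N] with r hr
  have hempty : ((Ioc (θ.k r) (θ.k (r + 1))).filter fun i => ε ≤ |x i - ℓ|) = ∅ := by
    refine filter_false_of_mem fun i hi => not_le.mpr ?_
    have hiN : N ≤ i := hr.trans ((θ.le_k r).trans (mem_Ioc.mp hi).1.le)
    simpa only [Real.dist_eq] using hN i hiN
  simp [hempty]

theorem not_lacStatConvTo_of_forall_le_abs_sub {θ : Lacunary} {x : ℕ → ℝ} {ℓ ε : ℝ}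
    (hε : 0 < ε) (hx : ∀ i, ε ≤ |x i - ℓ|) : ¬ LacStatConvTo θ x ℓ := by
  intro hconv
  have hone : ∀ r, ((((Ioc (θ.k r) (θ.k (r + 1))).filter fun i => ε ≤ |x i - ℓ|).card : ℝ)
      / ((θ.k (r + 1) - θ.k r : ℕ) : ℝ)) = 1 := fun r => by
    rw [filter_true_of_mem fun i _ => hx i, Nat.card_Ioc]
    exact div_self (Nat.cast_ne_zero.mpr (θ.k_sub_k_pos r).ne')
  have := tendsto_nhds_unique ((hconv ε hε).congr hone) tendsto_const_nhds
  norm_num at this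

theorem LacStatQC.of_tendsto {θ : Lacunary} {a : ℕ → ℝ} {ℓ : ℝ}
    (ha : Tendsto a atTop (𝓝 ℓ)) : LacStatQC θ a := by
  have hdiff : Tendsto (fun n => a (n + 1) - a n) atTop (𝓝 0) := by
    simpa using (ha.comp (tendsto_add_atTop_nat 1)).sub ha
  exact LacStatConvTo.of_tendsto hdiff

theorem exists_seq_abs_add_one_le_of_not_isBounded {A : Set ℝ}
    (hA : ¬ Bornology.IsBounded A) :
    ∃ x : ℕ → ℝ, (∀ n, x n ∈ A) ∧ ∀ m n, m < n → |x m| + 1 ≤ |x n| := by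
  have h : ∀ C : ℝ, ∃ a ∈ A, C < |a| := by
    simpa [isBounded_iff_forall_norm_le, Real.norm_eq_abs] using hA
  choose f hfA hf using h
  set c : ℕ → ℝ := fun n => (fun C => |f C| + 1)^[n] 0
  have hmono : StrictMono fun n : ℕ => |f (c n)| - n := by
    refine strictMono_nat_of_lt_succ fun n => ?_
    have hnext := hf (c (n + 1))
    simp only [c, Function.iterate_succ_apply'] at hnext ⊢
    push_cast
    linarith
  refine ⟨fun n => f (c n), fun n => hfA _, fun m n hmn => ?_⟩
  have hle := hmono.monotone hmn.le
  have hmn' : (m : ℝ) + 1 ≤ n := by exact_mod_cast hmn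
  simp only at hle ⊢
  linarith

theorem bounded_iff_lacStatWardCompact_general (θ : Lacunary)
    (A : Set ℝ) :
    Bornology.IsBounded A ↔ LacStatWardCompact θ A := by
  constructor
  · intro hA x hx
    obtain ⟨a, -, φ, hφ, hconv⟩ := tendsto_subseq_of_bounded hA hx
    exact ⟨φ, hφ, LacStatQC.of_tendsto hconv⟩
  · intro hcomp
    by_contra hA
    obtain ⟨x, hxA, hgrow⟩ := exists_seq_abs_add_one_le_of_not_isBounded hA
    obtain ⟨φ, hφ, hqc⟩ := hcomp x hxA
    refine not_lacStatConvTo_of_forall_le_abs_sub one_pos (fun i => ?_) hqc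
    have hjump := hgrow _ _ (hφ i.lt_succ_self)
    have htri := abs_sub_abs_le_abs_sub (x (φ (i + 1))) (x (φ i))
    simp only [Function.comp_apply, sub_zero]
    linarith

theorem bounded_iff_lacStatWardCompact (θ : Lacunary) (hθ : LiminfQGtOne θ)
    (A : Set ℝ) :
    Bornology.IsBounded A ↔ LacStatWardCompact θ A :=
  bounded_iff_lacStatWardCompact_general θ A
end

section
/- If f is lacunarily statistically ward continuous on a bounded subset A of ℝ, then f is uniformly continuous on A. -/
open Filter Finset Topology

/-!
Failing uniform continuity yields sequences `u, v` in `A` with `|u n - v n| → 0` but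
`|f (u n) - f (v n)| ≥ ε`. Since `A` is bounded we may pass to subsequences converging to a
common limit; interleaving them gives a convergent, hence lacunarily statistically quasi-Cauchy,
sequence in `A`. Its image under `f` jumps by at least `ε` at every even index, and even indices
fill at least a quarter of every long enough block `I_r`, so the image is not lacunarily
statistically quasi-Cauchy.
-/

theorem exists_seq_dist_tendsto_zero_of_not_uniformContinuousOn {α β : Type*}
    [PseudoMetricSpace α] [PseudoMetricSpace β] {f : α → β} {s : Set α}
    (hf : ¬ UniformContinuousOn f s) :
    ∃ ε > 0, ∃ u v : ℕ → α, (∀ n, u n ∈ s) ∧ (∀ n, v n ∈ s) ∧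
      Tendsto (fun n => dist (u n) (v n)) atTop (𝓝 0) ∧ ∀ n, ε ≤ dist (f (u n)) (f (v n)) := by
  rw [Metric.uniformContinuousOn_iff] at hf
  push Not at hf
  obtain ⟨ε, hε, hbad⟩ := hf
  choose u hu v hv huv hfuv using fun n : ℕ => hbad (1 / ((n : ℝ) + 1)) Nat.one_div_pos_of_nat
  exact ⟨ε, hε, u, v, hu, hv,
    squeeze_zero (fun _ => dist_nonneg) (fun n => (huv n).le) tendsto_one_div_add_atTop_nhds_zero_nat,
    hfuv⟩

section Interleave

variable {α β : Type*}

def interleave (u v : ℕ → α) (n : ℕ) : α :=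
  if Even n then u (n / 2) else v (n / 2)

@[simp]
theorem interleave_two_mul (u v : ℕ → α) (m : ℕ) : interleave u v (2 * m) = u m := by
  simp [interleave]

@[simp]
theorem interleave_two_mul_add_one (u v : ℕ → α) (m : ℕ) :
    interleave u v (2 * m + 1) = v m := by
  simp [interleave, show (2 * m + 1) / 2 = m by omega]

theorem comp_interleave (f : α → β) (u v : ℕ → α) :
    f ∘ interleave u v = interleave (f ∘ u) (f ∘ v) := by
  ext n
  simp only [Function.comp_apply, interleave]
  split_ifs <;> rfl

theorem forall_interleave_mem {s : Set α} {u v : ℕ → α} (hu : ∀ n, u n ∈ s)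
    (hv : ∀ n, v n ∈ s) (n : ℕ) : interleave u v n ∈ s := by
  unfold interleave
  split_ifs
  exacts [hu _, hv _]

theorem Filter.Tendsto.interleave {l : Filter α} {u v : ℕ → α} (hu : Tendsto u atTop l)
    (hv : Tendsto v atTop l) : Tendsto (interleave u v) atTop l := by
  have hhalf : Tendsto (· / 2) atTop atTop := Nat.tendsto_div_const_atTop two_ne_zero
  refine fun s hs => mem_map.mpr ?_
  filter_upwards [hhalf.eventually (hu hs), hhalf.eventually (hv hs)] with n hun hvn
  rw [Set.mem_preimage, _root_.interleave]
  split_ifs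
  exacts [hun, hvn]

end Interleave

theorem le_four_mul_card_filter_even_Ioc {a b : ℕ} (h : 4 ≤ b - a) :
    b - a ≤ 4 * #{i ∈ Ioc a b | Even i} := by
  have hsub : (Ioc (a / 2) (b / 2)).image (2 * ·) ⊆ {i ∈ Ioc a b | Even i} := by
    intro i hi
    obtain ⟨m, hm, rfl⟩ := mem_image.mp hi
    rw [mem_Ioc] at hm
    simp only [mem_filter, mem_Ioc, even_two_mul, and_true]
    omega
  have hcard : b / 2 - a / 2 ≤ #{i ∈ Ioc a b | Even i} := by
    calc b / 2 - a / 2 = #((Ioc (a / 2) (b / 2)).image (2 * ·)) := by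
          rw [card_image_of_injective _ fun _ _ h => by simpa using h, Nat.card_Ioc]
      _ ≤ _ := card_le_card hsub
  omega

section LacunaryStatistical

variable (θ : Lacunary)

theorem Filter.Tendsto.lacStatConvTo {x : ℕ → ℝ} {ℓ : ℝ} (hx : Tendsto x atTop (𝓝 ℓ)) :
    LacStatConvTo θ x ℓ := by
  intro ε hε
  obtain ⟨N, hN⟩ := Metric.tendsto_atTop.mp hx ε hε
  refine tendsto_const_nhds.congr' ?_
  filter_upwards [eventually_ge_atTop N] with r hr
  have hempty : {i ∈ Ioc (θ.k r) (θ.k (r + 1)) | ε ≤ |x i - ℓ|} = ∅ := by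
    refine filter_eq_empty_iff.mpr fun i hi => not_le.mpr ?_
    have hNi : N ≤ i := hr.trans (θ.strictMono.le_apply.trans (mem_Ioc.mp hi).1.le)
    simpa [Real.dist_eq] using hN i hNi
  simp [hempty]

theorem Filter.Tendsto.lacStatQC {x : ℕ → ℝ} {ℓ : ℝ} (hx : Tendsto x atTop (𝓝 ℓ)) :
    LacStatQC θ x := by
  have hdiff := (hx.comp (tendsto_add_atTop_nat 1)).sub hx
  rw [sub_self] at hdiff
  exact hdiff.lacStatConvTo θ

variable {θ}

theorem not_lacStatConvTo_zero_of_forall_even {x : ℕ → ℝ} {ε : ℝ} (hε : 0 < ε)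
    (hx : ∀ n, Even n → ε ≤ |x n|) : ¬ LacStatConvTo θ x 0 := by
  intro hconv
  have hquarter : ∀ᶠ r in atTop, (1 / 4 : ℝ) ≤
      #{i ∈ Ioc (θ.k r) (θ.k (r + 1)) | ε ≤ |x i - 0|} / ((θ.k (r + 1) - θ.k r : ℕ) : ℝ) := by
    filter_upwards [θ.h_tendsto.eventually_ge_atTop 4] with r hr
    set I := Ioc (θ.k r) (θ.k (r + 1))
    set h := θ.k (r + 1) - θ.k r
    have hcount : h ≤ 4 * #{i ∈ I | ε ≤ |x i - 0|} :=
      (le_four_mul_card_filter_even_Ioc hr).trans <| Nat.mul_le_mul_left 4 <|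
        card_le_card <| monotone_filter_right _ fun n _ hn => by simpa using hx n hn
    have hcount' : (h : ℝ) ≤ 4 * #{i ∈ I | ε ≤ |x i - 0|} := by exact_mod_cast hcount
    rw [le_div_iff₀ (by exact_mod_cast (show 0 < h by omega))]
    linarith
  have := ge_of_tendsto (hconv ε hε) hquarter
  norm_num at this

theorem not_lacStatQC_interleave {u v : ℕ → ℝ} {ε : ℝ} (hε : 0 < ε)
    (huv : ∀ m, ε ≤ |v m - u m|) : ¬ LacStatQC θ (interleave u v) :=
  not_lacStatConvTo_zero_of_forall_even hε fun n ⟨m, hm⟩ => by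
    simpa [hm, ← two_mul] using huv m

end LacunaryStatistical

theorem lacStatWardCont_on_bounded_uniformlyContinuous_general (θ : Lacunary)
    (A : Set ℝ) (f : ℝ → ℝ)
    (hA : Bornology.IsBounded A) (hf : LacStatWardContOn θ f A) :
    UniformContinuousOn f A := by
  by_contra hnot
  obtain ⟨ε, hε, u, v, hu, hv, huv, hfuv⟩ :=
    exists_seq_dist_tendsto_zero_of_not_uniformContinuousOn hnot
  obtain ⟨L, -, φ, hφ, huL⟩ := tendsto_subseq_of_bounded hA hu
  have hvL : Tendsto (v ∘ φ) atTop (𝓝 L) := huL.congr_dist (huv.comp hφ.tendsto_atTop)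
  have hxQC : LacStatQC θ (interleave (u ∘ φ) (v ∘ φ)) :=
    (huL.interleave hvL).lacStatQC θ
  have hfxQC := hf _ (forall_interleave_mem (fun n => hu (φ n)) fun n => hv (φ n)) hxQC
  rw [comp_interleave] at hfxQC
  refine not_lacStatQC_interleave hε (fun m => ?_) hfxQC
  simpa [Real.dist_eq, abs_sub_comm] using hfuv (φ m)

theorem lacStatWardCont_on_bounded_uniformlyContinuous (θ : Lacunary)
    (hθ : LiminfQGtOne θ) (A : Set ℝ) (f : ℝ → ℝ)
    (hA : Bornology.IsBounded A) (hf : LacStatWardContOn θ f A) :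
    UniformContinuousOn f A :=
  lacStatWardCont_on_bounded_uniformlyContinuous_general θ A f hA hf
end
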